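/- arXiv:1810.01868 — 4 statements merged into one kernel-verified Lean document; each statement's English description precedes it below -/
import Mathlib

section
/- Let X and Y be finite sets in ℝ^D, and let 𝒩 be a family of continuous functions ℝ^D → ℝ with the universal approximation property (i.e., for every compact K ⊆ ℝ^D and every continuous f : K → ℝ and ε > 0, there is a function in the linear span of 𝒩 within ε of f in the supremum norm on K). If for every τ ∈ 𝒩 we have Σ_{x ∈ X} τ(x) = Σ_{y ∈ Y} τ(y), then X = Y. -/
open Metric

theorem stmt_0 {D : ℕ} (X Y : Finset (EuclideanSpace ℝ (Fin D)))
    (𝒩 : Set (EuclideanSpace ℝ (Fin D) → ℝ))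
    (hcont : ∀ τ ∈ 𝒩, Continuous τ)
    (hUAP : ∀ K : Set (EuclideanSpace ℝ (Fin D)), IsCompact K →
      ∀ f : EuclideanSpace ℝ (Fin D) → ℝ, ContinuousOn f K → ∀ ε > 0,
        ∃ g ∈ Submodule.span ℝ 𝒩, ∀ x ∈ K, |f x - g x| ≤ ε)
    (h : ∀ τ ∈ 𝒩, ∑ x ∈ X, τ x = ∑ y ∈ Y, τ y) :
    X = Y := by
  classical
  -- Step 1: the sum identity extends to the span
  have hspan : ∀ g ∈ Submodule.span ℝ 𝒩, ∑ x ∈ X, g x = ∑ y ∈ Y, g y := by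
    intro g hg
    induction hg using Submodule.span_induction with
    | mem τ hτ => exact h τ hτ
    | zero => simp
    | add a b _ _ ha hb =>
        simp only [Pi.add_apply, Finset.sum_add_distrib, ha, hb]
    | smul c a _ ha =>
        simp only [Pi.smul_apply, smul_eq_mul, ← Finset.mul_sum, ha]
  -- Step 2: the sum identity holds for all continuous functions
  have hall : ∀ f : EuclideanSpace ℝ (Fin D) → ℝ, Continuous f →
      ∑ x ∈ X, f x = ∑ y ∈ Y, f y := by
    intro f hf
    set K : Set (EuclideanSpace ℝ (Fin D)) := ↑(X ∪ Y) with hKdef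
    have hK : IsCompact K := (X ∪ Y).finite_toSet.isCompact
    have key : ∀ ε : ℝ, 0 < ε →
        |∑ x ∈ X, f x - ∑ y ∈ Y, f y| ≤ (X.card + Y.card : ℝ) * ε := by
      intro ε hε
      obtain ⟨g, hg, hgb⟩ := hUAP K hK f hf.continuousOn ε hε
      have hgeq := hspan g hg
      have hX : |∑ x ∈ X, (f x - g x)| ≤ (X.card : ℝ) * ε := by
        calc |∑ x ∈ X, (f x - g x)| ≤ ∑ x ∈ X, |f x - g x| :=
              Finset.abs_sum_le_sum_abs _ _
          _ ≤ ∑ _x ∈ X, ε := Finset.sum_le_sum (fun x hx =>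
              hgb x (by simp [hKdef, hx]))
          _ = (X.card : ℝ) * ε := by simp [mul_comm]
      have hY : |∑ y ∈ Y, (f y - g y)| ≤ (Y.card : ℝ) * ε := by
        calc |∑ y ∈ Y, (f y - g y)| ≤ ∑ y ∈ Y, |f y - g y| :=
              Finset.abs_sum_le_sum_abs _ _
          _ ≤ ∑ _y ∈ Y, ε := Finset.sum_le_sum (fun y hy =>
              hgb y (by simp [hKdef, hy]))
          _ = (Y.card : ℝ) * ε := by simp [mul_comm]
      have : ∑ x ∈ X, f x - ∑ y ∈ Y, f y
          = (∑ x ∈ X, (f x - g x)) - (∑ y ∈ Y, (f y - g y)) := by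
        rw [Finset.sum_sub_distrib, Finset.sum_sub_distrib, hgeq]; ring
      rw [this]
      calc |(∑ x ∈ X, (f x - g x)) - (∑ y ∈ Y, (f y - g y))|
          ≤ |∑ x ∈ X, (f x - g x)| + |∑ y ∈ Y, (f y - g y)| := abs_sub _ _
        _ ≤ (X.card : ℝ) * ε + (Y.card : ℝ) * ε := add_le_add hX hY
        _ = (X.card + Y.card : ℝ) * ε := by ring
    have habs : |∑ x ∈ X, f x - ∑ y ∈ Y, f y| ≤ 0 := by
      refine le_of_forall_pos_le_add ?_
      intro ε hε
      have hden : (0 : ℝ) < (X.card + Y.card : ℝ) + 1 := by positivity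
      have := key (ε / ((X.card + Y.card : ℝ) + 1)) (by positivity)
      calc |∑ x ∈ X, f x - ∑ y ∈ Y, f y|
          ≤ (X.card + Y.card : ℝ) * (ε / ((X.card + Y.card : ℝ) + 1)) := this
        _ ≤ ε := by
            rw [mul_div_assoc']
            rw [div_le_iff₀ hden]
            nlinarith [Nat.cast_nonneg (α := ℝ) X.card,
              Nat.cast_nonneg (α := ℝ) Y.card]
        _ ≤ 0 + ε := by linarith
    have := abs_nonpos_iff.mp habs
    linarith [sub_eq_zero.mp this]
  -- Step 3: conclude X = Y using bump functions
  ext a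
  -- choose δ > 0 separating a from the other points of X ∪ Y
  obtain ⟨δ, hδpos, hδ⟩ : ∃ δ > 0, ∀ q ∈ X ∪ Y, q ≠ a → δ ≤ dist q a := by
    rcases Finset.eq_empty_or_nonempty ((X ∪ Y).erase a) with hS | hS
    · exact ⟨1, one_pos, fun q hq hne => absurd
        (Finset.mem_erase.mpr ⟨hne, hq⟩) (by simp [hS])⟩
    · refine ⟨((X ∪ Y).erase a).inf' hS (fun q => dist q a), ?_, ?_⟩
      · rw [gt_iff_lt, Finset.lt_inf'_iff]
        intro q hq
        exact dist_pos.mpr (Finset.mem_erase.mp hq).1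
      · intro q hq hne
        exact Finset.inf'_le _ (Finset.mem_erase.mpr ⟨hne, hq⟩)
  set f : EuclideanSpace ℝ (Fin D) → ℝ := fun x => max 0 (1 - dist x a / δ)
    with hfdef
  have hfc : Continuous f := by
    apply continuous_const.max
    exact continuous_const.sub ((continuous_id.dist continuous_const).div_const δ)
  have hfval : ∀ q ∈ X ∪ Y, f q = if q = a then 1 else 0 := by
    intro q hq
    by_cases hqa : q = a
    · simp [hfdef, hqa]
    · have h1 : δ ≤ dist q a := hδ q hq hqa
      have : 1 - dist q a / δ ≤ 0 := by
        rw [sub_nonpos, le_div_iff₀ hδpos, one_mul]; exact h1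
      simp [hfdef, hqa, max_eq_left this]
  have hsum := hall f hfc
  have hXs : ∑ x ∈ X, f x = if a ∈ X then (1 : ℝ) else 0 := by
    rw [Finset.sum_congr rfl (fun x hx => hfval x (Finset.mem_union_left _ hx)),
      Finset.sum_ite_eq' X a (fun _ => (1 : ℝ))]
  have hYs : ∑ y ∈ Y, f y = if a ∈ Y then (1 : ℝ) else 0 := by
    rw [Finset.sum_congr rfl (fun y hy => hfval y (Finset.mem_union_right _ hy)),
      Finset.sum_ite_eq' Y a (fun _ => (1 : ℝ))]
  rw [hXs, hYs] at hsum
  by_cases haX : a ∈ X <;> by_cases haY : a ∈ Y <;>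
    simp_all
end

section
/- Let S = {s₁, …, sₙ} and T = {t₁, …, tₘ} be finite multisets (given as finite lists up to permutation) of real numbers. If Σᵢ ReLU(sᵢ + b) = Σⱼ ReLU(tⱼ + b) for every b ∈ ℝ, then S = T as multisets. -/
lemma exists_max_of_ne_zero (M : Multiset ℝ) (hM : M ≠ 0) :
    ∃ m ∈ M, ∀ x ∈ M, x ≤ m := by
  induction M using Multiset.induction_on with
  | empty => exact absurd rfl hM
  | cons a M ih =>
    rcases eq_or_ne M 0 with rfl | hM0
    · exact ⟨a, Multiset.mem_cons_self a 0, by simp⟩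
    · obtain ⟨m, hm, hmax⟩ := ih hM0
      refine ⟨max a m, ?_, ?_⟩
      · rcases le_total a m with hh | hh
        · rw [max_eq_right hh]; exact Multiset.mem_cons_of_mem hm
        · rw [max_eq_left hh]; exact Multiset.mem_cons_self a M
      · intro x hx
        rcases Multiset.mem_cons.1 hx with rfl | hx
        · exact le_max_left _ _
        · exact le_trans (hmax x hx) (le_max_right _ _)

lemma exists_bound_lt (S : Multiset ℝ) (t : ℝ) (hst : ∀ s ∈ S, s < t) :
    ∃ c < t, ∀ s ∈ S, s ≤ c := by
  induction S using Multiset.induction_on with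
  | empty => exact ⟨t - 1, by linarith, by simp⟩
  | cons a S ih =>
    obtain ⟨c, hc, hb⟩ := ih (fun s hs => hst s (Multiset.mem_cons_of_mem hs))
    have ha : a < t := hst a (Multiset.mem_cons_self a S)
    refine ⟨max a c, max_lt ha hc, ?_⟩
    intro s hs
    rcases Multiset.mem_cons.1 hs with rfl | hs
    · exact le_max_left _ _
    · exact le_trans (hb s hs) (le_max_right _ _)

lemma aux_contra (S T : Multiset ℝ)
    (h : ∀ b : ℝ, (S.map (fun s => max (s + b) 0)).sum =
      (T.map (fun t => max (t + b) 0)).sum)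
    (t : ℝ) (ht : t ∈ T) (hst : ∀ s ∈ S, s < t) : False := by
  obtain ⟨c, hc, hb⟩ := exists_bound_lt S t hst
  set b : ℝ := -(c + t) / 2 with hbdef
  have hS : (S.map (fun s => max (s + b) 0)).sum = 0 := by
    apply Multiset.sum_eq_zero
    intro x hx
    obtain ⟨s, hs, rfl⟩ := Multiset.mem_map.1 hx
    have : s + b ≤ 0 := by
      have := hb s hs
      rw [hbdef]; linarith
    simp [max_eq_right this]
  have hpos : (0 : ℝ) < t + b := by rw [hbdef]; linarith
  have hle : max (t + b) 0 ≤ (T.map (fun t => max (t + b) 0)).sum := by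
    apply Multiset.single_le_sum
    · intro x hx; obtain ⟨s, _, rfl⟩ := Multiset.mem_map.1 hx; exact le_max_right _ _
    · exact Multiset.mem_map_of_mem _ ht
  rw [← h b, hS, max_eq_left hpos.le] at hle
  linarith

theorem stmt_4 (S T : Multiset ℝ)
    (h : ∀ b : ℝ, (S.map (fun s => max (s + b) 0)).sum =
      (T.map (fun t => max (t + b) 0)).sum) :
    S = T := by
  induction S using Multiset.strongInductionOn generalizing T with
  | ih S ih =>
  rcases eq_or_ne (S + T) 0 with h0 | h0
  · have := add_eq_zero.mp h0
    rw [this.1, this.2]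
  · obtain ⟨m, hm, hmax⟩ := exists_max_of_ne_zero _ h0
    have hmS : m ∈ S := by
      by_contra hms
      have hmT : m ∈ T := by
        rcases Multiset.mem_add.1 hm with h' | h'
        · exact absurd h' hms
        · exact h'
      exact aux_contra S T h m hmT (fun s hs =>
        lt_of_le_of_ne (hmax s (Multiset.mem_add.2 (Or.inl hs)))
          (fun he => hms (he ▸ hs)))
    have hmT : m ∈ T := by
      by_contra hmt
      exact aux_contra T S (fun b => (h b).symm) m hmS (fun s hs =>
        lt_of_le_of_ne (hmax s (Multiset.mem_add.2 (Or.inr hs)))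
          (fun he => hmt (he ▸ hs)))
    have hS : S = m ::ₘ S.erase m := (Multiset.cons_erase hmS).symm
    have hT : T = m ::ₘ T.erase m := (Multiset.cons_erase hmT).symm
    have h' : ∀ b : ℝ, ((S.erase m).map (fun s => max (s + b) 0)).sum =
        ((T.erase m).map (fun t => max (t + b) 0)).sum := by
      intro b
      have hb := h b
      rw [hS, hT, Multiset.map_cons, Multiset.map_cons, Multiset.sum_cons,
        Multiset.sum_cons] at hb
      exact add_left_cancel hb
    have hlt : S.erase m < S := Multiset.erase_lt.2 hmS
    rw [hS, hT, ih _ hlt _ h']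
end

section
/- Let μ, ν be two finite Borel measures on ℝ^K with compact support. If for every v ∈ ℝ^K the pushforward measures of μ and ν under the linear map x ↦ ⟨v, x⟩ are equal, then μ = ν (Cramér–Wold theorem for compactly supported measures). -/
open MeasureTheory

section CramerWold

variable {E : Type*} [NormedAddCommGroup E] [InnerProductSpace ℝ E] [MeasurableSpace E]
  [BorelSpace E]

lemma charFun_eq_charFun_map_inner (μ : Measure E) (t : E) :
    charFun μ t = charFun (μ.map fun x => (inner ℝ t x : ℝ)) 1 := by
  rw [charFun_eq_charFunDual_toDualMap, charFunDual_eq_charFun_map_one]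
  rfl

theorem Measure.ext_of_map_inner [CompleteSpace E] [SecondCountableTopology E]
    {μ ν : Measure E} [IsFiniteMeasure μ] [IsFiniteMeasure ν]
    (h : ∀ v : E, μ.map (fun x => (inner ℝ v x : ℝ)) = ν.map (fun x => (inner ℝ v x : ℝ))) :
    μ = ν :=
  Measure.ext_of_charFun <| funext fun t => by
    rw [charFun_eq_charFun_map_inner μ, charFun_eq_charFun_map_inner ν, h]

end CramerWold

theorem stmt_6_general {K : ℕ} (μ ν : Measure (EuclideanSpace ℝ (Fin K)))
    [IsFiniteMeasure μ] [IsFiniteMeasure ν]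
    (h : ∀ v : EuclideanSpace ℝ (Fin K),
      Measure.map (fun x => (inner ℝ v x : ℝ)) μ =
      Measure.map (fun x => (inner ℝ v x : ℝ)) ν) :
    μ = ν :=
  Measure.ext_of_map_inner h

theorem stmt_6 {K : ℕ} (μ ν : Measure (EuclideanSpace ℝ (Fin K)))
    [IsFiniteMeasure μ] [IsFiniteMeasure ν]
    (Kμ Kν : Set (EuclideanSpace ℝ (Fin K)))
    (hKμ : IsCompact Kμ) (hKν : IsCompact Kν)
    (hμsupp : μ Kμᶜ = 0) (hνsupp : ν Kνᶜ = 0)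
    (h : ∀ v : EuclideanSpace ℝ (Fin K),
      Measure.map (fun x => (inner ℝ v x : ℝ)) μ =
      Measure.map (fun x => (inner ℝ v x : ℝ)) ν) :
    μ = ν :=
  stmt_6_general μ ν h
end

section
/- Let X, Y ⊆ ℝ^K be finite sets. If for every v ∈ ℝ^K and b ∈ ℝ we have Σ_{x∈X} ReLU(⟨v,x⟩ + b) = Σ_{y∈Y} ReLU(⟨v,y⟩ + b), then X = Y. -/
/-!
Pick a direction `v` on which `⟪v, ·⟫` is injective on `X ∪ Y` (it exists because a real vector
space is not a finite union of the proper subspaces `(x - y)ᗮ`). Along `v` the hypothesis says that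
the multisets `s`, `t` of projections of `X` and of `Y` give the same function
`b ↦ ∑ max (a + b) 0`. Such a function determines its multiset: if some `a ∈ s` exceeded every
element of `t`, then at a bias `b` with `max t < -b < a` the `t`-sum would vanish and the `s`-sum
would not. So `s` and `t` have the same maximum; removing it from both and inducting gives `s = t`.
-/

open scoped RealInnerProductSpace

noncomputable def reluSum (s : Multiset ℝ) (b : ℝ) : ℝ :=
  (s.map fun a => max (a + b) 0).sum

namespace reluSum

@[simp]
lemma cons (a : ℝ) (s : Multiset ℝ) (b : ℝ) :
    reluSum (a ::ₘ s) b = max (a + b) 0 + reluSum s b := by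
  simp [reluSum]

lemma le_of_mem {s : Multiset ℝ} {a : ℝ} (ha : a ∈ s) (b : ℝ) : max (a + b) 0 ≤ reluSum s b :=
  Multiset.single_le_sum (by simp) _ (Multiset.mem_map_of_mem _ ha)

lemma eq_zero_of_forall_le {s : Multiset ℝ} {b : ℝ} (hs : ∀ a ∈ s, a + b ≤ 0) :
    reluSum s b = 0 :=
  Multiset.sum_eq_zero fun _ hx => by
    obtain ⟨a, ha, rfl⟩ := Multiset.mem_map.1 hx
    exact max_eq_right (hs a ha)

lemma le_of_eq_of_mem {s t : Multiset ℝ} (h : reluSum s = reluSum t) {a m : ℝ} (ha : a ∈ s)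
    (hm : ∀ c ∈ t, c ≤ m) : a ≤ m := by
  by_contra! hma
  have ht_zero : reluSum t (-(a + m) / 2) = 0 :=
    eq_zero_of_forall_le fun c hc => by linarith [hm c hc]
  have hs_pos := le_of_mem ha (-(a + m) / 2)
  rw [h, ht_zero] at hs_pos
  linarith [le_max_left (a + -(a + m) / 2) 0]

lemma exists_mem_mem_of_eq {s t : Multiset ℝ} (h : reluSum s = reluSum t) (hs : s ≠ 0) :
    ∃ m ∈ s, m ∈ t := by
  obtain ⟨a, has, ha_max⟩ := s.toFinset.exists_max_image id (Multiset.toFinset_nonempty.2 hs)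
  rw [Multiset.mem_toFinset] at has
  simp only [Multiset.mem_toFinset, id] at ha_max
  have ht : t ≠ 0 := by
    rintro rfl
    linarith [le_of_eq_of_mem h has (m := a - 1) (by simp)]
  obtain ⟨c, hct, hc_max⟩ := t.toFinset.exists_max_image id (Multiset.toFinset_nonempty.2 ht)
  rw [Multiset.mem_toFinset] at hct
  simp only [Multiset.mem_toFinset, id] at hc_max
  have hac : a = c := le_antisymm (le_of_eq_of_mem h has hc_max)
    (le_of_eq_of_mem h.symm hct ha_max)
  exact ⟨a, has, hac ▸ hct⟩

theorem injective : Function.Injective reluSum := by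
  intro s t h
  induction hn : Multiset.card s generalizing s t with
  | zero =>
    rw [Multiset.card_eq_zero] at hn
    subst hn
    by_contra ht
    obtain ⟨m, -, hm⟩ := exists_mem_mem_of_eq h.symm (Ne.symm ht)
    simp at hm
  | succ n ih =>
    obtain ⟨m, hms, hmt⟩ := exists_mem_mem_of_eq h (by rintro rfl; simp at hn)
    rw [← Multiset.cons_erase hms, ← Multiset.cons_erase hmt] at h ⊢
    have h_erase : reluSum (s.erase m) = reluSum (t.erase m) := by
      funext b
      simpa using congrFun h b
    rw [ih h_erase (by simp [Multiset.card_erase_of_mem hms, hn])]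

end reluSum

theorem exists_injOn_inner {E : Type*} [NormedAddCommGroup E] [InnerProductSpace ℝ E]
    (S : Finset E) : ∃ v : E, Set.InjOn (fun x => ⟪v, x⟫) S := by
  by_contra! h_none
  let p : {q : S × S // q.1 ≠ q.2} → Subspace ℝ E := fun q => (ℝ ∙ ((q.1.1 : E) - q.1.2))ᗮ
  have hcovers : ⋃ q, (p q : Set E) = Set.univ := by
    refine Set.eq_univ_of_forall fun v => ?_
    have h_noninj := h_none v
    simp only [Set.InjOn, not_forall] at h_noninj
    obtain ⟨x, hx, y, hy, hxy, hne⟩ := h_noninj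
    refine Set.mem_iUnion.2 ⟨⟨(⟨x, hx⟩, ⟨y, hy⟩), by simpa using hne⟩, ?_⟩
    simp only [p, SetLike.mem_coe, Submodule.mem_orthogonal_singleton_iff_inner_right,
      inner_sub_left, real_inner_comm v x, real_inner_comm v y]
    exact sub_eq_zero.2 hxy
  obtain ⟨⟨⟨x, y⟩, hne⟩, htop⟩ := Subspace.exists_eq_top_of_iUnion_eq_univ hcovers
  rw [Submodule.orthogonal_eq_top_iff, Submodule.span_singleton_eq_bot, sub_eq_zero] at htop
  exact hne (Subtype.ext htop)

theorem stmt_7 {K : ℕ} (X Y : Finset (EuclideanSpace ℝ (Fin K)))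
    (h : ∀ (v : EuclideanSpace ℝ (Fin K)) (b : ℝ),
      ∑ x ∈ X, max ((inner ℝ v x : ℝ) + b) 0 = ∑ y ∈ Y, max ((inner ℝ v y : ℝ) + b) 0) :
    X = Y := by
  obtain ⟨v, hv⟩ := exists_injOn_inner (X ∪ Y)
  have h_proj : X.val.map (inner ℝ v) = Y.val.map (inner ℝ v) := by
    refine reluSum.injective (funext fun b => ?_)
    simpa only [reluSum, Multiset.map_map, Function.comp_def, Finset.sum_eq_multiset_sum]
      using h v b
  have h_image : X.image (inner ℝ v) = Y.image (inner ℝ v) := congrArg Multiset.toFinset h_proj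
  rw [← Finset.coe_inj, ← hv.image_eq_image_iff (by simp) (by simp), ← Finset.coe_image,
    ← Finset.coe_image, h_image]
end
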